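/- arXiv:2501.00275 — 3 statements merged into one kernel-verified Lean document; each statement's English description precedes it below -/
import Mathlib

section
/- Let X=(x_1,…,x_n) and X̄=(1/x_1,…,1/x_n). For any partition λ with at most n parts, 𝔬_λ(−X,−X̄,−1) = (−1)^{|λ|} so_λ(X); and for any partition λ with at most n+1 parts, 𝔰𝔬⁻_λ(−X,−X̄,−1) = oe_λ(−X,−1), where oe_λ(−X,−1) is the even orthogonal character in the n+1 variables (−x_1,…,−x_n,−1). -/
open scoped BigOperators

noncomputable section

variable {K : Type} [Field K]

/-- Complete homogeneous symmetric polynomial of degree `m` in the list of variables `X`. -/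
def hh : ℕ → List K → K
  | 0, _ => 1
  | _ + 1, [] => 0
  | m + 1, x :: xs => x * hh m (x :: xs) + hh (m + 1) xs
  termination_by m X => (m, X.length)

/-- `h` indexed by an integer: zero for a negative index. -/
def hz (m : ℤ) (X : List K) : K := if 0 ≤ m then hh m.toNat X else 0

def invList (X : List K) : List K := X.map (·⁻¹)
def negList (X : List K) : List K := X.map (fun x => -x)
def powList (X : List K) (e : ℕ) : List K := X.map (· ^ e)

/-- the variables `(X, ωX, ω²X, …, ω^{t-1}X)`. -/
def twistList (t : ℕ) (ω : K) (X : List K) : List K :=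
  (List.range t).flatMap fun k => X.map (fun x => ω ^ k * x)

/-- Schur polynomial (Jacobi–Trudi, `N × N` determinant). -/
def schur (lam : ℕ → ℕ) (N : ℕ) (X : List K) : K :=
  Matrix.det (Matrix.of fun i j : Fin N => hz ((lam i : ℤ) - i + j) X)

/-- Skew Schur polynomial. -/
def skewSchur (lam mu : ℕ → ℕ) (N : ℕ) (X : List K) : K :=
  Matrix.det (Matrix.of fun i j : Fin N => hz ((lam i : ℤ) - (mu j : ℤ) - i + j) X)

/-- Symplectic character `sp_λ(X)`. -/
def spChar (lam : ℕ → ℕ) (N : ℕ) (X : List K) : K :=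
  (2 : K)⁻¹ * Matrix.det (Matrix.of fun i j : Fin N =>
    hz ((lam i : ℤ) - i + j) (X ++ invList X) + hz ((lam i : ℤ) - i - j) (X ++ invList X))

/-- Odd orthogonal character `so_λ(X)`. -/
def soChar (lam : ℕ → ℕ) (N : ℕ) (X : List K) : K :=
  Matrix.det (Matrix.of fun i j : Fin N =>
    hz ((lam i : ℤ) - i + j) (X ++ invList X ++ [1]) -
      hz ((lam i : ℤ) - i - j - 2) (X ++ invList X ++ [1]))

/-- Even orthogonal character `oe_λ(X)`. -/
def oeChar (lam : ℕ → ℕ) (N : ℕ) (X : List K) : K :=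
  Matrix.det (Matrix.of fun i j : Fin N =>
    hz ((lam i : ℤ) - i + j) (X ++ invList X) -
      hz ((lam i : ℤ) - i - j - 2) (X ++ invList X))

/-- Universal even orthogonal character `𝔬_λ(Z)`. -/
def uo (lam : ℕ → ℕ) (N : ℕ) (Z : List K) : K :=
  Matrix.det (Matrix.of fun i j : Fin N =>
    hz ((lam i : ℤ) - i + j) Z - hz ((lam i : ℤ) - i - j - 2) Z)

/-- Universal symplectic character `𝔰𝔭_λ(Z)`. -/
def usp (lam : ℕ → ℕ) (N : ℕ) (Z : List K) : K :=
  (2 : K)⁻¹ * Matrix.det (Matrix.of fun i j : Fin N =>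
    hz ((lam i : ℤ) - i + j) Z + hz ((lam i : ℤ) - i - j) Z)

/-- Universal odd orthogonal character `𝔰𝔬_λ(Z)`. -/
def uso (lam : ℕ → ℕ) (N : ℕ) (Z : List K) : K :=
  Matrix.det (Matrix.of fun i j : Fin N =>
    hz ((lam i : ℤ) - i + j) Z + hz ((lam i : ℤ) - i - j - 1) Z)

/-- The variant `𝔰𝔬⁻_λ(Z)`. -/
def usoNeg (lam : ℕ → ℕ) (N : ℕ) (Z : List K) : K :=
  Matrix.det (Matrix.of fun i j : Fin N =>
    hz ((lam i : ℤ) - i + j) Z - hz ((lam i : ℤ) - i - j - 1) Z)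

/-- beta-set `β(λ,m) = (λ_1+m-1, …, λ_m)`, as a (decreasing) list. -/
def betaList (lam : ℕ → ℕ) (m : ℕ) : List ℕ :=
  (List.range m).map fun i => lam i + (m - 1 - i)

/-- the number `n_i(λ,m)` of elements of `β(λ,m)` congruent to `i` mod `s`. -/
def nres (lam : ℕ → ℕ) (m s i : ℕ) : ℕ :=
  ((betaList lam m).filter fun b => b % s = i).length

def sortDesc (L : List ℕ) : List ℕ := List.insertionSort (· ≥ ·) L

/-- the `s`-core of `λ`, computed from `β(λ,m)`. -/
def coreP (lam : ℕ → ℕ) (m s : ℕ) : ℕ → ℕ := fun k =>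
  let L := sortDesc ((List.range s).flatMap fun i =>
    (List.range (nres lam m s i)).map fun j => s * j + i)
  if k < m then L.getD k 0 + k + 1 - m else 0

/-- the `i`-th member `λ^{(i)}` of the `s`-quotient of `λ`, computed from `β(λ,m)`. -/
def quotP (lam : ℕ → ℕ) (m s i : ℕ) : ℕ → ℕ := fun k =>
  let L := sortDesc (((betaList lam m).filter fun b => b % s = i).map fun b => b / s)
  if k < L.length then L.getD k 0 + k + 1 - L.length else 0

/-- conjugate partition (`N` a bound on the number of parts). -/
def conjB (f : ℕ → ℕ) (N k : ℕ) : ℕ := ((Finset.range N).filter fun j => k < f j).card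

/-- Frobenius rank. -/
def frank (f : ℕ → ℕ) (N : ℕ) : ℕ := ((Finset.range N).filter fun i => i + 1 ≤ f i).card

/-- number of nonzero parts (`N` a bound on the number of parts). -/
def plen (f : ℕ → ℕ) (N : ℕ) : ℕ := ((Finset.range N).filter fun i => 0 < f i).card

/-- sum of the parts (`N` a bound on the number of parts). -/
def psum (f : ℕ → ℕ) (N : ℕ) : ℕ := ∑ i ∈ Finset.range N, f i

def IsSelfConj (f : ℕ → ℕ) (N : ℕ) : Prop := ∀ k, f k = conjB f N k

/-- symplectic partition: `(α | α+1)` in Frobenius coordinates. -/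
def IsSymplecticP (f : ℕ → ℕ) (N : ℕ) : Prop := ∀ i < frank f N, conjB f N i = f i + 1

/-- orthogonal partition: `(α+1 | α)` in Frobenius coordinates. -/
def IsOrthogonalP (f : ℕ → ℕ) (N : ℕ) : Prop := ∀ i < frank f N, f i = conjB f N i + 1

/-- the partition `(λ, -μ)_N`. -/
def negConcat (f g : ℕ → ℕ) (N : ℕ) : ℕ → ℕ := fun k =>
  if k < N then g 0 + f k - g (N - 1 - k) else 0

/-- number of inversions: pairs `i < j` with `L_i < L_j`. -/
def invCount (L : List ℕ) : ℕ :=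
  (Finset.univ.filter fun p : Fin L.length × Fin L.length =>
    (p.1 : ℕ) < (p.2 : ℕ) ∧ L.get p.1 < L.get p.2).card

def sgnList (L : List ℕ) : ℤ := (-1) ^ invCount L

/-- rearrangement of `β(λ,m)`: residue classes mod `s` listed in the order given by `E`
followed by the remaining residues increasingly, decreasingly within each class. -/
def blockedList (E : List ℕ) (lam : ℕ → ℕ) (m s : ℕ) : List ℕ :=
  (E ++ (List.range s).filter fun a => a ∉ E).flatMap fun e =>
    sortDesc ((betaList lam m).filter fun b => b % s = e)

/-- sign of the permutation `σ_λ^E`. -/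
def sgnSigmaE (E : List ℕ) (lam : ℕ → ℕ) (m s : ℕ) : ℤ := sgnList (blockedList E lam m s)

/-- sign of the permutation `σ_λ`. -/
def sgnSigma (lam : ℕ → ℕ) (m s : ℕ) : ℤ := sgnSigmaE [] lam m s

/-- staircase partition `(k, k-1, …, 1)`. -/
def stair (k : ℕ) : ℕ → ℕ := fun i => k - i

/-- a field containing `n` generic variables. -/
abbrev FF (n : ℕ) : Type := FractionRing (MvPolynomial (Fin n) ℂ)

/-- the `n` generic variables of `FF n`. -/
def genX (n : ℕ) : List (FF n) :=
  List.ofFn fun i : Fin n => algebraMap (MvPolynomial (Fin n) ℂ) (FF n) (MvPolynomial.X i)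

end

/-! Negating every variable multiplies `hₘ` by `(-1)ᵐ`; in the determinant `𝔬_λ` the sign of
entry `(i, j)` is `(-1)^(λᵢ - i) (-1)^j`, and these row and column signs multiply to `(-1)^|λ|`.

Since `hₘ` is symmetric with generating series `∏ (1 - z t)⁻¹`, adjoining the variable `-1`
divides it by `1 + t`: `hₘ(Z) = hₘ(Z, -1) + hₘ₋₁(Z, -1)`. Substituting this into `𝔰𝔬⁻_λ(Z)`,
column `j` becomes column `j` plus column `j - 1` (absent for `j = 0`) of the matrix of
`𝔬_λ(Z, -1)`, so the two determinants agree. For `Z = (-X, -X̄, -1)` the variables `(Z, -1)`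
are, up to order, those of `oe_λ(-X, -1)`. -/

section CharacterIdentities

variable {K : Type} [Field K]

open PowerSeries

lemma hh_zero (L : List K) : hh 0 L = 1 := by
  rw [hh]

lemma hh_succ_nil (m : ℕ) : hh (m + 1) ([] : List K) = 0 := by
  rw [hh]

lemma hh_succ_cons (m : ℕ) (x : K) (L : List K) :
    hh (m + 1) (x :: L) = x * hh m (x :: L) + hh (m + 1) L := by
  rw [hh]

lemma hz_of_neg {m : ℤ} (h : m < 0) (L : List K) : hz m L = 0 :=
  if_neg (not_le.2 h)

lemma hz_natCast (m : ℕ) (L : List K) : hz (m : ℤ) L = hh m L := by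
  simp [hz]

lemma hz_cons (m : ℤ) (x : K) (L : List K) :
    hz m (x :: L) = x * hz (m - 1) (x :: L) + hz m L := by
  obtain ⟨k, rfl | rfl⟩ := Int.eq_nat_or_neg m
  · cases k with
    | zero => simp [hz, hh_zero]
    | succ k =>
      rw [(by omega : ((k + 1 : ℕ) : ℤ) - 1 = k), hz_natCast, hz_natCast, hz_natCast,
        hh_succ_cons]
  · rcases Nat.eq_zero_or_pos k with rfl | hk
    · simp [hz, hh_zero]
    · simp only [hz_of_neg (by omega : -(k : ℤ) < 0), hz_of_neg (by omega : -(k : ℤ) - 1 < 0),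
        mul_zero, add_zero]

def hSeries (L : List K) : K⟦X⟧ := mk fun m => hh m L

lemma one_sub_C_mul_X_mul_hSeries_cons (x : K) (L : List K) :
    (1 - C x * X) * hSeries (x :: L) = hSeries L := by
  ext (_ | m)
  · simp [hSeries, hh_zero]
  · simp [hSeries, sub_mul, mul_assoc, coeff_succ_X_mul, hh_succ_cons]

lemma hSeries_mul_prod (L : List K) :
    hSeries L * (L.map fun x => 1 - C x * X).prod = 1 := by
  induction L with
  | nil => ext (_ | m) <;> simp [hSeries, hh_zero, hh_succ_nil]
  | cons x L ih =>
    rw [List.map_cons, List.prod_cons, ← mul_assoc, mul_comm (hSeries _),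
      one_sub_C_mul_X_mul_hSeries_cons, ih]

lemma hh_perm {L L' : List K} (h : L.Perm L') (m : ℕ) : hh m L = hh m L' := by
  have hprod : (L.map fun x => 1 - C x * X).prod = (L'.map fun x => 1 - C x * X).prod :=
    (h.map _).prod_eq
  have : hSeries L = hSeries L' := by
    calc hSeries L = hSeries L * ((L'.map fun x => 1 - C x * X).prod * hSeries L') := by
          rw [mul_comm _ (hSeries L'), hSeries_mul_prod, mul_one]
      _ = hSeries L' := by rw [← mul_assoc, ← hprod, hSeries_mul_prod, one_mul]
  simpa [hSeries] using congrArg (coeff m) this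

lemma hz_perm {L L' : List K} (h : L.Perm L') (m : ℤ) : hz m L = hz m L' := by
  simp only [hz, hh_perm h]

lemma uo_perm {L L' : List K} (h : L.Perm L') (lam : ℕ → ℕ) (N : ℕ) :
    uo lam N L = uo lam N L' := by
  simp only [uo, hz_perm h]

lemma hh_negList (L : List K) (m : ℕ) : hh m (negList L) = (-1) ^ m * hh m L := by
  induction L generalizing m with
  | nil => cases m <;> simp [negList, hh_zero, hh_succ_nil]
  | cons x L ih =>
    induction m with
    | zero => simp [hh_zero]
    | succ m ihm =>
      have hcons : negList (x :: L) = -x :: negList L := rfl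
      rw [hcons, hh_succ_cons, ← hcons, ihm, ih, hh_succ_cons]
      ring

lemma hz_negList (m : ℤ) (L : List K) : hz m (negList L) = (-1) ^ m * hz m L := by
  obtain ⟨k, rfl | rfl⟩ := Int.eq_nat_or_neg m
  · rw [hz_natCast, hz_natCast, hh_negList, zpow_natCast]
  · rcases Nat.eq_zero_or_pos k with rfl | hk
    · simp [hz, hh_zero]
    · simp only [hz_of_neg (by omega : -(k : ℤ) < 0), mul_zero]

lemma uo_negList (lam : ℕ → ℕ) (N : ℕ) (Z : List K) :
    uo lam N (negList Z) = (-1) ^ (∑ i : Fin N, lam i) * uo lam N Z := by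
  have hsign (a : ℤ) (j : ℕ) : (-1 : K) ^ (a - j - 2) = (-1) ^ (a + j) := by
    rw [(by ring : a - j - 2 = a + j + 2 * (-j - 1)), zpow_add₀ (by norm_num), zpow_mul]
    simp
  have hentry : (Matrix.of fun i j : Fin N =>
      hz ((lam i : ℤ) - i + j) (negList Z) - hz ((lam i : ℤ) - i - j - 2) (negList Z)) =
      Matrix.diagonal (fun i : Fin N => (-1 : K) ^ ((lam i : ℤ) - i)) *
        (Matrix.of fun i j : Fin N =>
          hz ((lam i : ℤ) - i + j) Z - hz ((lam i : ℤ) - i - j - 2) Z) *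
        Matrix.diagonal fun j : Fin N => (-1 : K) ^ (j : ℤ) := by
    ext i j
    simp only [Matrix.of_apply, Matrix.mul_diagonal, Matrix.diagonal_mul, hz_negList, hsign,
      zpow_add₀ (by norm_num : (-1 : K) ≠ 0)]
    ring
  have hrow (i : ℕ) : ((-1 : K) ^ ((lam i : ℤ) - i)) * (-1) ^ (i : ℤ) = (-1) ^ lam i := by
    rw [← zpow_add₀ (by norm_num), sub_add_cancel, zpow_natCast]
  rw [uo, hentry, Matrix.det_mul, Matrix.det_mul, Matrix.det_diagonal, Matrix.det_diagonal,
    mul_right_comm, ← Finset.prod_mul_distrib]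
  simp only [hrow, Finset.prod_pow_eq_pow_sum, uo]

lemma hz_eq_hz_cons_neg_one (m : ℤ) (Z : List K) :
    hz m Z = hz m (-1 :: Z) + hz (m - 1) (-1 :: Z) := by
  rw [hz_cons m (-1) Z]
  ring

lemma usoNeg_eq_uo_cons_neg_one (lam : ℕ → ℕ) (N : ℕ) (Z : List K) :
    usoNeg lam N Z = uo lam N (-1 :: Z) := by
  cases N with
  | zero => simp [usoNeg, uo, Matrix.det_isEmpty]
  | succ N =>
    symm
    refine Matrix.det_eq_of_forall_col_eq_smul_add_pred (fun _ => -1) (fun i => ?_) fun i j => ?_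
    · simp only [Matrix.of_apply, Fin.val_zero, Nat.cast_zero, hz_eq_hz_cons_neg_one _ Z]
      ring_nf
    · simp only [Matrix.of_apply, Fin.val_succ, Fin.val_castSucc, Nat.cast_add, Nat.cast_one,
        hz_eq_hz_cons_neg_one _ Z]
      ring_nf

end CharacterIdentities

theorem stmt2_general (n : ℕ) (X : List ℂ) (lam : ℕ → ℕ) (mu : ℕ → ℕ) :
    uo lam n (negList X ++ negList (invList X) ++ [-1]) =
        (-1 : ℂ) ^ psum lam n * soChar lam n X ∧
      usoNeg mu (n + 1) (negList X ++ negList (invList X) ++ [-1]) =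
        oeChar mu (n + 1) (negList X ++ [-1]) := by
  constructor
  · have hneg : negList X ++ negList (invList X) ++ [-1] =
        negList (X ++ invList X ++ [(1 : ℂ)]) := by
      simp [negList]
    rw [hneg, uo_negList, psum, ← Fin.sum_univ_eq_sum_range]
    rfl
  · rw [usoNeg_eq_uo_cons_neg_one]
    apply uo_perm
    simp only [invList, negList, List.map_append, List.map_map, Function.comp_def, inv_neg,
      List.map_cons, List.map_nil, inv_one, List.append_assoc, List.singleton_append]
    exact List.perm_middle.symm

/-- `𝔬_λ(-X, -X̄, -1) = (-1)^{|λ|} so_λ(X)` and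
`𝔰𝔬⁻_μ(-X, -X̄, -1) = oe_μ(-X, -1)`. -/
theorem stmt2 (n : ℕ) (X : List ℂ) (hX : X.length = n) (hX0 : ∀ x ∈ X, x ≠ 0)
    (lam : ℕ → ℕ) (hlam : Antitone lam) (hlamlen : ∀ i, n ≤ i → lam i = 0)
    (mu : ℕ → ℕ) (hmu : Antitone mu) (hmulen : ∀ i, n + 1 ≤ i → mu i = 0) :
    uo lam n (negList X ++ negList (invList X) ++ [-1]) =
        (-1 : ℂ) ^ psum lam n * soChar lam n X ∧
      usoNeg mu (n + 1) (negList X ++ negList (invList X) ++ [-1]) =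
        oeChar mu (n + 1) (negList X ++ [-1]) :=
  stmt2_general n X lam mu
end

section
/- Let t ≥ 2 and let μ be a partition with at most tn parts, and set λ = (±μ)_{2tn}. Then the t-core of λ is the empty partition if and only if the t-core of μ is self-conjugate. -/
/-!
Everything is read off the `t`-abacus. If `B` is an `m`-element β-set of a partition `κ` and
`G v = #{x ∈ B | v ≤ x}`, then `b < κ_a ↔ a < G (m + b - a)`, so `κ` is self-conjugate iff
`G (m + v) = G (m - v) - v` for all `v`; since `G (m - v) - G (m + v)` grows by
`[m - 1 - v ∈ B] + [m + v ∈ B]` at each step, this says `B ⊆ [0, 2m)` and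
`x ∈ B ↔ 2m - 1 - x ∉ B`. The `t`-core of `μ` has the `tn`-element β-set
`{t j + r | j < n_r(μ)}`, so it is self-conjugate iff `n_r(μ) + n_{t-1-r}(μ) = 2n` for every
residue `r`. The β-set of `λ = (±μ)_{2tn}` is `(c + β(μ)) ∪ (c - 1 - β(μ))` with `c = μ₁ + tn`,
so `n_{(c+r) mod t}(λ) = n_r(μ) + n_{t-1-r}(μ)`, while the `t`-core of `λ` is empty iff every
`n_i(λ) = 2n`.
-/

open scoped BigOperators

def countGE (L : List ℕ) (v : ℕ) : ℕ := L.countP (v ≤ ·)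

/-- The partition whose β-set with `m` elements is `L`, listed decreasingly. -/
def partOfBeta (L : List ℕ) (m : ℕ) : ℕ → ℕ := fun k =>
  if k < m then L.getD k 0 + k + 1 - m else 0

/-- The β-set `{s j + i | j < n_i}` of the `s`-core, listed decreasingly as in `coreP`. -/
def coreBeta (f : ℕ → ℕ) (m s : ℕ) : List ℕ :=
  sortDesc ((List.range s).flatMap fun i => (List.range (nres f m s i)).map fun j => s * j + i)

lemma coreP_eq_partOfBeta (f : ℕ → ℕ) (m s : ℕ) :
    coreP f m s = partOfBeta (coreBeta f m s) m := rfl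

section countGE

variable {L : List ℕ}

lemma countGE_zero : countGE L 0 = L.length := by
  simp [countGE]

lemma countGE_le_length (v : ℕ) : countGE L v ≤ L.length := List.countP_le_length

lemma countGE_eq_zero_iff {v : ℕ} : countGE L v = 0 ↔ ∀ x ∈ L, x < v := by
  simp [countGE, List.countP_eq_zero]

lemma countGE_eq_countGE_succ_add (hL : L.Nodup) (v : ℕ) :
    countGE L v = countGE L (v + 1) + if v ∈ L then 1 else 0 := by
  induction L with
  | nil => simp [countGE]
  | cons x L ih =>
    obtain ⟨hx, hL⟩ := List.nodup_cons.1 hL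
    simp only [countGE, List.countP_cons] at ih ⊢
    rw [ih hL]
    by_cases hv : v = x
    · subst hv
      simp [hx]
    · simp only [List.mem_cons, hv, false_or]
      split_ifs <;> simp_all <;> omega

lemma countGE_le_countGE_add (hL : L.Nodup) (v a : ℕ) :
    countGE L v ≤ countGE L (v + a) + a := by
  induction a with
  | zero => simp
  | succ a ih =>
    have := countGE_eq_countGE_succ_add hL (v + a)
    rw [← Nat.add_assoc v]
    split_ifs at this <;> omega

lemma lt_countGE_iff (hL : L.Pairwise (· > ·)) {a : ℕ} (ha : a < L.length) (v : ℕ) :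
    a < countGE L v ↔ v ≤ L[a] := by
  induction L generalizing a with
  | nil => simp at ha
  | cons x L ih =>
    obtain ⟨hx, hL⟩ := List.pairwise_cons.1 hL
    have hcons : countGE (x :: L) v = countGE L v + if v ≤ x then 1 else 0 := by
      simp [countGE, List.countP_cons]
    rw [hcons]
    by_cases h : v ≤ x
    · rcases a with _ | a
      · simp [h]
      · simp only [h, if_true, List.getElem_cons_succ]
        rw [← ih hL (by simpa using ha)]
        omega
    · have hzero : countGE L v = 0 :=
        countGE_eq_zero_iff.2 fun y hy => (hx y hy).trans (by omega)
      rcases a with _ | a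
      · simp [h, hzero]
      · have := hx _ (List.getElem_mem (by simpa using ha : a < L.length))
        simp only [h, hzero, if_false, List.getElem_cons_succ]
        omega

end countGE

lemma lt_conjB_iff {f : ℕ → ℕ} {N : ℕ} (hf : Antitone f) (hN : ∀ j, N ≤ j → f j = 0)
    (a b : ℕ) : a < conjB f N b ↔ b < f a := by
  unfold conjB
  constructor
  · intro h
    by_contra hab
    have hsub : (Finset.range N).filter (fun j => b < f j) ⊆ Finset.range a := by
      intro j hj
      simp only [Finset.mem_filter, Finset.mem_range] at hj ⊢
      by_contra hja
      exact hab (hj.2.trans_le (hf (not_lt.1 hja)))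
    simpa using (Finset.card_le_card hsub).trans_lt' h
  · intro h
    have haN : a < N := by
      by_contra haN
      rw [hN a (not_lt.1 haN)] at h
      omega
    have hsub : Finset.range (a + 1) ⊆ (Finset.range N).filter (fun j => b < f j) := by
      intro j hj
      simp only [Finset.mem_filter, Finset.mem_range] at hj ⊢
      exact ⟨by omega, h.trans_le (hf (by omega))⟩
    simpa using Finset.card_le_card hsub

lemma isSelfConj_iff_forall_lt_iff {f : ℕ → ℕ} {N : ℕ} (hf : Antitone f)
    (hN : ∀ j, N ≤ j → f j = 0) : IsSelfConj f N ↔ ∀ a b, b < f a ↔ a < f b := by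
  refine ⟨fun h a b => by rw [h a, lt_conjB_iff hf hN], fun h k => ?_⟩
  exact eq_of_forall_lt_iff fun c => (h k c).trans (lt_conjB_iff hf hN c k).symm

lemma forall_lt_iff_add_lt_iff {A B v : ℕ} : (∀ a, a < A ↔ a + v < B) ↔ A = B - v :=
  ⟨fun h => by have := h A; have := h (B - v); omega, fun h a => by omega⟩

lemma ite_add_ite_eq_one_iff {p q : Prop} [Decidable p] [Decidable q] :
    ((if p then 1 else 0) + (if q then 1 else 0) = 1) ↔ (p ↔ ¬q) := by
  by_cases p <;> by_cases q <;> simp [*]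

lemma forall_pair_iff_forall_reflect {P : ℕ → Prop} {m : ℕ} :
    (∀ v < m, (P (m + v) ↔ ¬P (m - 1 - v))) ↔ ∀ x < 2 * m, (P x ↔ ¬P (2 * m - 1 - x)) := by
  constructor
  · intro h x hx
    rcases lt_or_ge x m with hxm | hxm
    · have := h (m - 1 - x) (by omega)
      rw [show m - 1 - (m - 1 - x) = x by omega, show m + (m - 1 - x) = 2 * m - 1 - x by omega]
        at this
      tauto
    · simpa [show m + (x - m) = x by omega, show m - 1 - (x - m) = 2 * m - 1 - x by omega]
        using h (x - m) (by omega)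
  · intro h v hv
    simpa [show 2 * m - 1 - (m + v) = m - 1 - v by omega] using h (m + v) (by omega)

section partOfBeta

variable {L : List ℕ} {m : ℕ}

lemma lt_partOfBeta_iff (hL : L.Pairwise (· > ·)) (hm : L.length = m) (a b : ℕ) :
    b < partOfBeta L m a ↔ a < countGE L (m + b - a) := by
  unfold partOfBeta
  split_ifs with ha
  · rw [lt_countGE_iff hL (hm ▸ ha), List.getD_eq_getElem _ _ (hm ▸ ha)]
    omega
  · have := countGE_le_length (L := L) (m + b - a)
    omega

lemma partOfBeta_antitone (hL : L.Pairwise (· > ·)) (hm : L.length = m) :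
    Antitone (partOfBeta L m) := by
  intro a a' haa'
  refine le_of_forall_lt fun b hb => ?_
  rw [lt_partOfBeta_iff hL hm] at hb ⊢
  have := countGE_le_length (L := L) (m + b - a')
  have h := countGE_le_countGE_add hL.nodup (m + b - a') (a' - a)
  rw [show m + b - a' + (a' - a) = m + b - a by omega] at h
  omega

lemma partOfBeta_eq_zero_iff (hL : L.Pairwise (· > ·)) (hm : L.length = m) :
    (∀ k, partOfBeta L m k = 0) ↔ ∀ x ∈ L, x < m := by
  have hpos : ∀ k, partOfBeta L m k = 0 ↔ ¬ k < countGE L (m - k) := fun k => by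
    simpa using (lt_partOfBeta_iff hL hm k 0).not
  simp only [hpos, ← countGE_eq_zero_iff]
  refine ⟨fun h => by simpa using h 0, fun h k hk => ?_⟩
  rcases le_or_gt k m with hkm | hkm
  · have := countGE_le_countGE_add hL.nodup (m - k) k
    rw [Nat.sub_add_cancel hkm] at this
    omega
  · rw [Nat.sub_eq_zero_of_le hkm.le, countGE_zero] at hk
    omega

lemma isSelfConj_partOfBeta_iff (hL : L.Pairwise (· > ·)) (hm : L.length = m) :
    IsSelfConj (partOfBeta L m) m ↔ ∀ v, countGE L (m + v) = countGE L (m - v) - v := by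
  have hzero : ∀ j, m ≤ j → partOfBeta L m j = 0 := fun j hj => if_neg (by omega)
  simp only [isSelfConj_iff_forall_lt_iff (partOfBeta_antitone hL hm) hzero,
    lt_partOfBeta_iff hL hm, ← forall_lt_iff_add_lt_iff]
  constructor
  · intro h v a
    simpa [show m + (a + v) - a = m + v by omega, show m + a - (a + v) = m - v by omega]
      using h a (a + v)
  · intro h a b
    rcases le_total a b with hab | hab
    · simpa [show m + (b - a) = m + b - a by omega, show a + (b - a) = b by omega,
        show m - (b - a) = m + a - b by omega] using h (b - a) a
    · simpa [show m + (a - b) = m + a - b by omega, show b + (a - b) = a by omega,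
        show m - (a - b) = m + b - a by omega] using (h (a - b) b).symm

lemma countGE_sub_succ_add (hL : L.Nodup) {v : ℕ} (hv : v < m) :
    countGE L (m - (v + 1)) + countGE L (m + v) = countGE L (m - v) + countGE L (m + (v + 1)) +
      ((if m - 1 - v ∈ L then 1 else 0) + if m + v ∈ L then 1 else 0) := by
  have h₁ := countGE_eq_countGE_succ_add hL (m - 1 - v)
  have h₂ := countGE_eq_countGE_succ_add hL (m + v)
  rw [show m - 1 - v + 1 = m - v by omega] at h₁
  rw [show m - (v + 1) = m - 1 - v by omega, h₁, h₂, ← Nat.add_assoc m]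
  ring

lemma countGE_sub_eq_add_of_pair (hL : L.Nodup)
    (hpair : ∀ v < m, (m + v ∈ L ↔ m - 1 - v ∉ L)) {v : ℕ} (hv : v ≤ m) :
    countGE L (m - v) = countGE L (m + v) + v := by
  induction v with
  | zero => simp
  | succ v ih =>
    have := countGE_sub_succ_add hL (show v < m by omega)
    have := ite_add_ite_eq_one_iff.2 (hpair v (by omega))
    have := ih (by omega)
    omega

lemma countGE_add_eq_sub_iff (hL : L.Nodup) (hm : L.length = m) :
    (∀ v, countGE L (m + v) = countGE L (m - v) - v) ↔
      (∀ x ∈ L, x < 2 * m) ∧ ∀ v < m, (m + v ∈ L ↔ m - 1 - v ∉ L) := by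
  constructor
  · intro h
    have hlow : ∀ v ≤ m, v ≤ countGE L (m - v) := fun v hv => by
      have := countGE_le_countGE_add hL 0 (m - v)
      rw [countGE_zero, hm, Nat.zero_add] at this
      omega
    refine ⟨?_, fun v hv => ite_add_ite_eq_one_iff.1 ?_⟩
    · have := h m
      rwa [Nat.sub_self, countGE_zero, hm, Nat.sub_self, countGE_eq_zero_iff, ← two_mul] at this
    · have := countGE_sub_succ_add hL hv
      have := h v
      have := h (v + 1)
      have := hlow v hv.le
      have := hlow (v + 1) hv
      omega
  · rintro ⟨hb, hpair⟩ v
    rcases le_or_gt v m with hv | hv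
    · have := countGE_sub_eq_add_of_pair hL hpair hv
      omega
    · rw [countGE_eq_zero_iff.2 fun x hx => (hb x hx).trans (by omega),
        Nat.sub_eq_zero_of_le hv.le, countGE_zero]
      omega

end partOfBeta

lemma sum_length_filter_mod_eq {s : ℕ} (hs : 0 < s) (L : List ℕ) :
    ∑ i ∈ Finset.range s, (L.filter fun b => b % s = i).length = L.length := by
  induction L with
  | nil => simp
  | cons b L ih =>
    simp only [← List.countP_eq_length_filter, List.countP_cons] at ih ⊢
    simp [Finset.sum_add_distrib, ih, Nat.mod_lt b hs]

section coreBeta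

variable {f : ℕ → ℕ} {m s : ℕ}

lemma sum_nres (hs : 0 < s) : ∑ i ∈ Finset.range s, nres f m s i = m := by
  simp [nres, sum_length_filter_mod_eq hs, betaList]

lemma length_coreBeta (hs : 0 < s) : (coreBeta f m s).length = m := by
  rw [coreBeta, sortDesc, List.length_insertionSort, List.length_flatMap]
  refine Eq.trans ?_ (sum_nres (f := f) hs)
  simp [Finset.sum, Multiset.range]

lemma mem_coreBeta (hs : 0 < s) {x : ℕ} : x ∈ coreBeta f m s ↔ x / s < nres f m s (x % s) := by
  simp only [coreBeta, sortDesc, (List.perm_insertionSort _ _).mem_iff, List.mem_flatMap,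
    List.mem_range, List.mem_map]
  constructor
  · rintro ⟨i, hi, j, hj, rfl⟩
    rwa [Nat.mul_add_mod, Nat.mod_eq_of_lt hi, Nat.mul_add_div hs, Nat.div_eq_of_lt hi,
      Nat.add_zero]
  · exact fun h => ⟨x % s, Nat.mod_lt _ hs, x / s, h, Nat.div_add_mod x s⟩

lemma mul_add_mem_coreBeta {i j : ℕ} (hi : i < s) :
    s * j + i ∈ coreBeta f m s ↔ j < nres f m s i := by
  have hs : 0 < s := by omega
  rw [mem_coreBeta hs, Nat.mul_add_mod, Nat.mod_eq_of_lt hi, Nat.mul_add_div hs,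
    Nat.div_eq_of_lt hi, Nat.add_zero]

lemma coreBeta_pairwise : (coreBeta f m s).Pairwise (· > ·) := by
  have hnodup : (coreBeta f m s).Nodup := by
    refine (List.perm_insertionSort _ _).nodup_iff.2 (List.nodup_flatMap.2 ⟨?_, ?_⟩)
    · intro i hi
      have hs : 0 < s := by simp at hi; omega
      exact List.nodup_range.map fun j j' h => Nat.eq_of_mul_eq_mul_left hs (by simpa using h)
    · refine List.nodup_range.pairwise_of_forall_ne fun i hi i' hi' hne x hx hx' => hne ?_
      simp only [List.mem_range, List.mem_map] at hi hi' hx hx'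
      obtain ⟨j, -, rfl⟩ := hx
      obtain ⟨j', -, h⟩ := hx'
      simpa [Nat.mul_add_mod, Nat.mod_eq_of_lt, hi, hi'] using congr_arg (· % s) h.symm
  exact ((List.pairwise_insertionSort _ _).and hnodup).imp fun h => lt_of_le_of_ne' h.1 h.2

lemma forall_mem_coreBeta_lt_iff (hs : 0 < s) {q : ℕ} :
    (∀ x ∈ coreBeta f m s, x < s * q) ↔ ∀ i < s, nres f m s i ≤ q := by
  constructor
  · intro h i hi
    by_contra hq
    have := h _ ((mul_add_mem_coreBeta hi).2 (not_le.1 hq))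
    omega
  · intro h x hx
    rw [mem_coreBeta hs] at hx
    rw [mul_comm, ← Nat.div_lt_iff_lt_mul hs]
    exact hx.trans_le (h _ (Nat.mod_lt x hs))

end coreBeta

lemma coreP_eq_zero_iff {f : ℕ → ℕ} {s : ℕ} (hs : 0 < s) (q : ℕ) :
    (∀ k, coreP f (s * q) s k = 0) ↔ ∀ i < s, nres f (s * q) s i = q := by
  rw [coreP_eq_partOfBeta, partOfBeta_eq_zero_iff coreBeta_pairwise (length_coreBeta hs),
    forall_mem_coreBeta_lt_iff hs]
  refine ⟨fun h => ?_, fun h i hi => (h i hi).le⟩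
  have hsum : ∑ i ∈ Finset.range s, nres f (s * q) s i = ∑ i ∈ Finset.range s, q := by
    simp [sum_nres hs]
  intro i hi
  exact (Finset.sum_eq_sum_iff_of_le fun i hi => h i (Finset.mem_range.1 hi)).1 hsum i
    (Finset.mem_range.2 hi)

lemma forall_lt_mul_iff {t q : ℕ} (ht : 0 < t) (P : ℕ → Prop) :
    (∀ x < t * q, P x) ↔ ∀ r < t, ∀ j < q, P (t * j + r) := by
  constructor
  · intro h r hr j hj
    exact h _ (by nlinarith)
  · intro h x hx
    rw [← Nat.div_add_mod x t]
    exact h _ (Nat.mod_lt x ht) _ ((Nat.div_lt_iff_lt_mul ht).2 (by rwa [mul_comm]))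

lemma mul_sub_one_sub_mul_add {t q r j : ℕ} (hr : r < t) (hj : j < q) :
    t * q - 1 - (t * j + r) = t * (q - 1 - j) + (t - 1 - r) := by
  obtain ⟨q, rfl⟩ := Nat.exists_eq_add_of_lt hj
  rw [show j + q + 1 - 1 - j = q by omega, mul_add, mul_add]
  omega

lemma add_eq_of_forall_lt_iff_add_lt {N N' q : ℕ} (hN : N ≤ q) (hN' : N' ≤ q)
    (h : ∀ j < q, (j < N ↔ j + N' < q)) : N + N' = q := by
  rcases lt_trichotomy (N + N') q with hlt | heq | hgt
  · have := h N (by omega)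
    omega
  · exact heq
  · have := h (q - N') (by omega)
    omega

lemma isSelfConj_coreP_iff (f : ℕ → ℕ) {t : ℕ} (ht : 0 < t) (n : ℕ) :
    IsSelfConj (coreP f (t * n) t) (t * n) ↔
      ∀ r < t, nres f (t * n) t r + nres f (t * n) t (t - 1 - r) = 2 * n := by
  have hL := coreBeta_pairwise (f := f) (m := t * n) (s := t)
  rw [coreP_eq_partOfBeta, isSelfConj_partOfBeta_iff hL (length_coreBeta ht),
    countGE_add_eq_sub_iff hL.nodup (length_coreBeta ht), forall_pair_iff_forall_reflect,
    show 2 * (t * n) = t * (2 * n) by ring, forall_mem_coreBeta_lt_iff ht, forall_lt_mul_iff ht]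
  have hmem : ∀ r < t, ∀ j < 2 * n, (t * j + r ∈ coreBeta f (t * n) t ↔
      t * (2 * n) - 1 - (t * j + r) ∉ coreBeta f (t * n) t) ↔
      (j < nres f (t * n) t r ↔ j + nres f (t * n) t (t - 1 - r) < 2 * n) := by
    intro r hr j hj
    rw [mul_sub_one_sub_mul_add hr hj, mul_add_mem_coreBeta hr, mul_add_mem_coreBeta (by omega)]
    omega
  constructor
  · rintro ⟨hb, hpair⟩ r hr
    exact add_eq_of_forall_lt_iff_add_lt (hb r hr) (hb _ (by omega))
      fun j hj => (hmem r hr j hj).1 (hpair r hr j hj)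
  · intro h
    refine ⟨fun r hr => by have := h r hr; omega, fun r hr j hj => (hmem r hr j hj).2 ?_⟩
    have := h r hr
    omega

section negConcat

variable {mu : ℕ → ℕ} {m : ℕ}

lemma betaList_negConcat (hmu : Antitone mu) (hlen : ∀ i, m ≤ i → mu i = 0) :
    betaList (negConcat mu mu (2 * m)) (2 * m) =
      (betaList mu m).map (mu 0 + m + ·) ++ ((betaList mu m).map (mu 0 + m - 1 - ·)).reverse := by
  refine List.ext_getElem (by simp [betaList]; omega) fun k hk _ => ?_
  simp only [betaList, List.length_range, List.length_map] at hk
  simp only [betaList, negConcat, List.getElem_map, List.getElem_range, List.getElem_append,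
    List.getElem_reverse, List.length_map, List.length_range, if_pos hk]
  split_ifs with hkm
  · rw [hlen (2 * m - 1 - k) (by omega)]
    omega
  · have := hmu (Nat.zero_le (2 * m - 1 - k))
    rw [hlen k (by omega), show m - 1 - (k - m) = 2 * m - 1 - k by omega]
    omega

lemma lt_of_mem_betaList (hmu : Antitone mu) {x : ℕ} (hx : x ∈ betaList mu m) :
    x < mu 0 + m := by
  simp only [betaList, List.mem_map, List.mem_range] at hx
  obtain ⟨i, hi, rfl⟩ := hx
  have := hmu (Nat.zero_le i)
  omega

lemma mod_eq_iff_natCast_eq {a b t : ℕ} (hb : b < t) : a % t = b ↔ (a : ZMod t) = b := by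
  rw [ZMod.natCast_eq_natCast_iff', Nat.mod_eq_of_lt hb]

lemma nres_negConcat (hmu : Antitone mu) (hlen : ∀ i, m ≤ i → mu i = 0) {t r : ℕ} (hr : r < t) :
    nres (negConcat mu mu (2 * m)) (2 * m) t ((mu 0 + m + r) % t) =
      nres mu m t r + nres mu m t (t - 1 - r) := by
  simp only [nres, ← List.countP_eq_length_filter, betaList_negConcat hmu hlen,
    List.countP_append, List.countP_reverse, List.countP_map]
  congr 1 <;> refine List.countP_congr fun x hx => ?_ <;>
    simp only [Function.comp_apply, decide_eq_true_eq, ← ZMod.natCast_eq_natCast_iff']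
  · rw [mod_eq_iff_natCast_eq hr]
    push_cast
    exact add_right_inj _
  · have := lt_of_mem_betaList hmu hx
    rw [mod_eq_iff_natCast_eq (show t - 1 - r < t by omega), Nat.cast_sub (by omega),
      Nat.cast_sub (by omega), Nat.cast_sub (by omega), Nat.cast_sub (by omega)]
    push_cast
    rw [ZMod.natCast_self]
    constructor <;> intro h <;> linear_combination -h

end negConcat

lemma exists_lt_add_mod_eq (c : ℕ) {t i : ℕ} (hi : i < t) : ∃ r < t, (c + r) % t = i := by
  have : NeZero t := ⟨by omega⟩
  refine ⟨((i : ZMod t) - c).val, ZMod.val_lt _, ?_⟩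
  rw [mod_eq_iff_natCast_eq hi, Nat.cast_add, ZMod.natCast_zmod_val]
  ring

/-- The `t`-core of `(±μ)_{2tn}` is empty iff the `t`-core of `μ`
is self-conjugate. -/
theorem stmt9 (t n : ℕ) (ht : 2 ≤ t)
    (mu : ℕ → ℕ) (hmu : Antitone mu) (hlen : ∀ i, t * n ≤ i → mu i = 0) :
    (∀ k, coreP (negConcat mu mu (2 * t * n)) (2 * t * n) t k = 0) ↔
      IsSelfConj (coreP mu (t * n) t) (t * n) := by
  have ht₀ : 0 < t := by omega
  rw [show 2 * t * n = t * (2 * n) by ring, coreP_eq_zero_iff ht₀, isSelfConj_coreP_iff mu ht₀,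
    show t * (2 * n) = 2 * (t * n) by ring]
  constructor
  · intro h r hr
    rw [← nres_negConcat hmu hlen hr]
    exact h _ (Nat.mod_lt _ ht₀)
  · intro h i hi
    obtain ⟨r, hr, rfl⟩ := exists_lt_add_mod_eq (mu 0 + t * n) hi
    rw [nres_negConcat hmu hlen hr]
    exact h r hr
end

section
/- Let X=(x_1,…,x_n) and Y=(y_1,…,y_m). Then s_{(n+m, n+m−1, …, 1)}(X,Y) = s_{(n,n−1,…,1)}(X) · s_{(m,m−1,…,1)}(Y) · ∏_{i=1}^n ∏_{j=1}^m (x_i + y_j), and s_{(n+m−1, n+m−2, …, 1)}(X,Y) = s_{(n−1,n−2,…,1)}(X) · s_{(m−1,m−2,…,1)}(Y) · ∏_{i=1}^n ∏_{j=1}^m (x_i + y_j). -/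
open scoped BigOperators

/-! For distinct `z` in a field, `∑ l, z l ^ k / ∏ j ≠ l, (z l - z j) = h_{k+1-N}(z)` (by
induction on `k` and `N`, starting from Lagrange interpolation of the constant `1`), so the
Jacobi–Trudi matrix of `λ` factors as `A * D * V` with `A = (z l ^ (λ i + N - 1 - i))`, `D`
diagonal and `V` Vandermonde. The Jacobi–Trudi matrix of `λ = 0` is unitriangular, and comparing
with it gives the bialternant formula `s_λ · a_ρ = a_{λ+ρ}` with `ρ = (N-1, …, 1, 0)`. A
staircase is `λ = ρ + (δ, …, δ)`, so `a_{λ+ρ}(z) = ∏ z ^ δ · a_ρ(z²)`, and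
`a_ρ(z²) / a_ρ(z) = ∏_{i<j} (z i + z j)` by the Vandermonde determinant. Specialising generic
variables extends the identity to any commutative ring, and the product over pairs of `X ++ Y`
splits into pairs inside `X`, inside `Y`, and across. -/

section CommRing

open Finset Matrix

variable {R S : Type*} [CommRing R] [CommRing S]

-- `hh`, `hz` and `schur` over a commutative ring, so that identities proved for generic
-- variables can be specialised along ring homomorphisms.
def hhR : ℕ → List R → R
  | 0, _ => 1
  | _ + 1, [] => 0
  | m + 1, x :: xs => x * hhR m (x :: xs) + hhR (m + 1) xs
  termination_by m X => (m, X.length)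

def hzR (m : ℤ) (X : List R) : R := if 0 ≤ m then hhR m.toNat X else 0

def schurR (lam : ℕ → ℕ) (N : ℕ) (X : List R) : R :=
  Matrix.det (Matrix.of fun i j : Fin N => hzR ((lam i : ℤ) - i + j) X)

@[simp] theorem hhR_zero (X : List R) : hhR 0 X = 1 := by simp [hhR]

@[simp] theorem hhR_succ_nil (m : ℕ) : hhR (m + 1) ([] : List R) = 0 := by simp [hhR]

theorem hhR_succ_cons (m : ℕ) (x : R) (xs : List R) :
    hhR (m + 1) (x :: xs) = x * hhR m (x :: xs) + hhR (m + 1) xs := by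
  rw [hhR]

theorem map_hhR (f : R →+* S) : ∀ (m : ℕ) (X : List R), f (hhR m X) = hhR m (X.map f)
  | 0, _ => by simp
  | m + 1, [] => by simp
  | m + 1, x :: xs => by
    rw [hhR_succ_cons, List.map_cons, hhR_succ_cons, map_add, map_mul, map_hhR f m (x :: xs),
      map_hhR f (m + 1) xs, List.map_cons]
  termination_by m X => (m, X.length)

theorem map_hzR (f : R →+* S) (m : ℤ) (X : List R) : f (hzR m X) = hzR m (X.map f) := by
  unfold hzR; split <;> simp [map_hhR]

theorem map_schurR (f : R →+* S) (lam : ℕ → ℕ) (N : ℕ) (X : List R) :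
    f (schurR lam N X) = schurR lam N (X.map f) := by
  simp only [schurR, RingHom.map_det, RingHom.mapMatrix_apply]
  congr 1
  ext i j
  simp [map_hzR]

@[simp] theorem hzR_zero (X : List R) : hzR 0 X = 1 := by simp [hzR]

theorem hzR_of_neg {m : ℤ} (hm : m < 0) (X : List R) : hzR m X = 0 := by
  simp [hzR, not_le.mpr hm]

@[simp] theorem hzR_nil_of_pos {m : ℤ} (hm : 0 < m) : hzR m ([] : List R) = 0 := by
  obtain ⟨k, rfl⟩ : ∃ k : ℕ, m = k + 1 := ⟨(m - 1).toNat, by omega⟩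
  simp [hzR, show ((k : ℤ) + 1).toNat = k + 1 by omega]

theorem hzR_add_one_cons (α : ℤ) (x : R) (xs : List R) :
    hzR (α + 1) (x :: xs) = x * hzR α (x :: xs) + hzR (α + 1) xs := by
  rcases lt_trichotomy α (-1) with h | rfl | h
  · simp [hzR_of_neg (show α < 0 by omega), hzR_of_neg (show α + 1 < 0 by omega)]
  · simp [hzR_of_neg (show (-1 : ℤ) < 0 by omega)]
  · obtain ⟨k, rfl⟩ : ∃ k : ℕ, α = k := ⟨α.toNat, by omega⟩
    simp only [hzR, show (0 : ℤ) ≤ k + 1 by omega, Nat.cast_nonneg, if_true]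
    exact_mod_cast hhR_succ_cons k x xs

theorem schurR_zero (N : ℕ) (X : List R) : schurR (fun _ => 0) N X = 1 := by
  rw [schurR, det_of_isUpperTriangular]
  · simp
  · intro i j (hji : j < i)
    exact hzR_of_neg (by simp [Fin.lt_def.mp hji]) X

variable {N : ℕ}

def alternant (e : Fin N → ℕ) (z : Fin N → R) : R := (of fun i l => z l ^ e i).det

theorem alternant_rho (z : Fin N → R) :
    alternant (fun i => N - 1 - i) z =
      Equiv.Perm.sign (Fin.revPerm : Equiv.Perm (Fin N)) * (vandermonde z).det := by
  rw [← det_transpose, ← det_permute, alternant]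
  congr 1
  ext i l
  simp only [of_apply, submatrix_apply, transpose_apply, vandermonde_apply, Fin.revPerm_apply,
    Fin.val_rev, id_eq]
  congr 1
  omega

theorem alternant_two_mul_rho_add (δ : ℕ) (z : Fin N → R) :
    alternant (fun i => 2 * (N - 1 - i) + δ) z =
      (∏ l, z l ^ δ) * alternant (fun i => N - 1 - i) (fun l => z l ^ 2) := by
  rw [alternant, alternant, ← det_mul_row]
  congr 1
  ext i l
  simp only [of_apply, ← pow_mul, ← pow_add]
  ring_nf

theorem alternant_rho_sq (z : Fin N → R) :
    alternant (fun i => N - 1 - i) (fun l => z l ^ 2) =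
      alternant (fun i => N - 1 - i) z * ∏ i, ∏ j ∈ Ioi i, (z i + z j) := by
  simp only [alternant_rho, det_vandermonde, mul_assoc, ← prod_mul_distrib]
  congr 1
  refine prod_congr rfl fun i _ => prod_congr rfl fun j _ => ?_
  ring

end CommRing

section Lagrange

open Finset

variable {K : Type*} [Field K] {ι : Type*} [DecidableEq ι]

theorem sum_pow_succ_div_prod_sub {s : Finset ι} {v : ι → K} (hvs : Set.InjOn v s) {a : ι}
    (ha : a ∈ s) (k : ℕ) :
    ∑ i ∈ s, v i ^ (k + 1) / ∏ j ∈ s.erase i, (v i - v j) =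
      v a * ∑ i ∈ s, v i ^ k / ∏ j ∈ s.erase i, (v i - v j) +
        ∑ i ∈ s.erase a, v i ^ k / ∏ j ∈ (s.erase a).erase i, (v i - v j) := by
  rw [← sub_eq_iff_eq_add', mul_sum, ← sum_sub_distrib]
  have hterm : ∀ i ∈ s, v i ^ (k + 1) / ∏ j ∈ s.erase i, (v i - v j) -
      v a * (v i ^ k / ∏ j ∈ s.erase i, (v i - v j)) =
        (v i - v a) * v i ^ k / ∏ j ∈ s.erase i, (v i - v j) := fun i _ => by ring
  rw [sum_congr rfl hterm, ← sum_erase s (a := a) (by simp)]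
  refine sum_congr rfl fun i hi => ?_
  obtain ⟨hia, his⟩ := mem_erase.mp hi
  have hsub : v i - v a ≠ 0 := sub_ne_zero.mpr fun h => hia (hvs his ha h)
  rw [← mul_prod_erase _ _ (mem_erase.mpr ⟨Ne.symm hia, ha⟩), erase_right_comm,
    mul_div_mul_left _ _ hsub]

theorem sum_one_div_prod_sub {s : Finset ι} {v : ι → K} (hvs : Set.InjOn v s) :
    ∑ i ∈ s, 1 / ∏ j ∈ s.erase i, (v i - v j) = if #s = 1 then 1 else 0 := by
  rcases s.eq_empty_or_nonempty with rfl | hs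
  · simp
  have hcard := card_pos.mpr hs
  have hcoeff := Lagrange.coeff_eq_sum hvs (P := 1) (by
    rw [Polynomial.degree_one]; exact_mod_cast hcard)
  simp only [Polynomial.coeff_one, Polynomial.eval_one] at hcoeff
  simp only [← hcoeff, show #s - 1 = 0 ↔ #s = 1 by omega]

theorem sum_pow_div_prod_sub_eq_hzR {v : ι → K} : ∀ (L : List ι), L.Nodup →
    Set.InjOn v L.toFinset → ∀ k : ℕ,
      ∑ i ∈ L.toFinset, v i ^ k / ∏ j ∈ L.toFinset.erase i, (v i - v j) =
        hzR ((k : ℤ) + 1 - L.length) (L.map v)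
  | [], _, _, k => by simp [show (0 : ℤ) < k + 1 by omega]
  | a :: T, hL, hv, k => by
    obtain ⟨haT, hT⟩ := List.nodup_cons.mp hL
    have hvT : Set.InjOn v T.toFinset := hv.mono (by simp)
    simp only [List.toFinset_cons, List.length_cons, List.map_cons] at hv ⊢
    induction k with
    | zero =>
      simp only [pow_zero, sum_one_div_prod_sub hv,
        card_insert_of_notMem (List.mem_toFinset.not.mpr haT), List.toFinset_card_of_nodup hT]
      rcases T with _ | ⟨b, T⟩
      · simp
      · rw [if_neg (by simp), hzR_of_neg (by simp only [List.length_cons]; omega)]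
    | succ k ih =>
      rw [sum_pow_succ_div_prod_sub hv (mem_insert_self a _), ih,
        erase_insert (List.mem_toFinset.not.mpr haT), sum_pow_div_prod_sub_eq_hzR T hT hvT k]
      convert (hzR_add_one_cons _ (v a) (T.map v)).symm using 3 <;> push_cast <;> ring

end Lagrange

section Bialternant

open Finset Matrix

variable {K : Type*} [Field K] {N : ℕ}

theorem sum_pow_div_prod_sub_eq_hzR_ofFn {z : Fin N → K} (hz : Function.Injective z) (k : ℕ) :
    ∑ l, z l ^ k / ∏ j ∈ univ.erase l, (z l - z j) = hzR ((k : ℤ) + 1 - N) (List.ofFn z) := by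
  simpa [List.ofFn_eq_map] using
    sum_pow_div_prod_sub_eq_hzR (List.finRange N) (List.nodup_finRange N) hz.injOn k

theorem jacobiTrudi_eq_mul (lam : ℕ → ℕ) {z : Fin N → K} (hz : Function.Injective z) :
    of (fun i j : Fin N => hzR ((lam i : ℤ) - i + j) (List.ofFn z)) =
      of (fun i l : Fin N => z l ^ (lam i + (N - 1 - i))) *
        diagonal (fun l => (∏ j ∈ univ.erase l, (z l - z j))⁻¹) * vandermonde z := by
  ext i j
  have hk : ((lam i + (N - 1 - i) + j : ℕ) : ℤ) + 1 - N = (lam i : ℤ) - i + j := by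
    have := i.isLt
    omega
  rw [mul_apply, of_apply, ← hk, ← sum_pow_div_prod_sub_eq_hzR_ofFn hz]
  refine sum_congr rfl fun l _ => ?_
  rw [mul_diagonal, of_apply, vandermonde_apply, pow_add, div_eq_mul_inv]
  ring

theorem schurR_mul_alternant (lam : ℕ → ℕ) {z : Fin N → K} (hz : Function.Injective z) :
    schurR lam N (List.ofFn z) * alternant (fun i => N - 1 - i) z =
      alternant (fun i => lam i + (N - 1 - i)) z := by
  set c := (diagonal fun l => (∏ j ∈ univ.erase l, (z l - z j))⁻¹).det * (vandermonde z).det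
  have hfactor (μ : ℕ → ℕ) :
      schurR μ N (List.ofFn z) = alternant (fun i => μ i + (N - 1 - i)) z * c := by
    rw [schurR, jacobiTrudi_eq_mul μ hz, det_mul, det_mul, alternant, mul_assoc]
  have hc : alternant (fun i => N - 1 - i) z * c = 1 := by
    simpa [schurR_zero] using (hfactor fun _ => 0).symm
  rw [hfactor, mul_right_comm, mul_assoc, hc, mul_one]

theorem alternant_rho_ne_zero {z : Fin N → K} (hz : Function.Injective z) :
    alternant (fun i => N - 1 - i) z ≠ 0 := by
  rw [alternant_rho]
  refine mul_ne_zero ?_ (det_vandermonde_ne_zero_iff.mpr hz)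
  rcases Int.units_eq_one_or (Equiv.Perm.sign (Fin.revPerm : Equiv.Perm (Fin N))) with h | h <;>
    simp [h]

theorem schurR_staircase_of_injective (δ : ℕ) {lam : ℕ → ℕ}
    (hlam : ∀ i < N, lam i = N - 1 - i + δ) {z : Fin N → K} (hz : Function.Injective z) :
    schurR lam N (List.ofFn z) = (∏ l, z l ^ δ) * ∏ i, ∏ j ∈ Ioi i, (z i + z j) := by
  have hexp : (fun i : Fin N => lam i + (N - 1 - i)) = fun i : Fin N => 2 * (N - 1 - i) + δ := by
    ext i
    rw [hlam i i.isLt]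
    ring
  apply mul_right_cancel₀ (alternant_rho_ne_zero hz)
  rw [schurR_mul_alternant lam hz, hexp, alternant_two_mul_rho_add, alternant_rho_sq]
  ring

end Bialternant

section Staircase

open Finset

variable {R : Type*} [CommRing R] {N : ℕ}

theorem schurR_staircase (δ : ℕ) {lam : ℕ → ℕ} (hlam : ∀ i < N, lam i = N - 1 - i + δ)
    (z : Fin N → R) :
    schurR lam N (List.ofFn z) = (∏ l, z l ^ δ) * ∏ i, ∏ j ∈ Ioi i, (z i + z j) := by
  let ι := algebraMap (MvPolynomial (Fin N) ℤ) (FractionRing (MvPolynomial (Fin N) ℤ))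
  have hι : Function.Injective ι := IsFractionRing.injective _ _
  have hgeneric := schurR_staircase_of_injective δ hlam (z := fun l => ι (MvPolynomial.X l))
    (hι.comp MvPolynomial.X_injective)
  have hpoly : schurR lam N (List.ofFn MvPolynomial.X) =
      (∏ l, MvPolynomial.X l ^ δ) * ∏ i, ∏ j ∈ Ioi i, (MvPolynomial.X i + MvPolynomial.X j) :=
    hι (by simpa [map_schurR, List.map_ofFn, map_prod, Function.comp_def] using hgeneric)
  simpa [map_schurR, List.map_ofFn, map_prod, Function.comp_def] using
    congrArg (MvPolynomial.eval₂Hom (Int.castRingHom R) z) hpoly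

theorem schurR_stair (z : Fin N → R) :
    schurR (stair N) N (List.ofFn z) = (∏ l, z l) * ∏ i, ∏ j ∈ Ioi i, (z i + z j) := by
  simpa using schurR_staircase 1 (fun i hi => by simp only [stair]; omega) z

theorem schurR_stair_sub_one (z : Fin N → R) :
    schurR (stair (N - 1)) N (List.ofFn z) = ∏ i, ∏ j ∈ Ioi i, (z i + z j) := by
  simpa using schurR_staircase 0 (fun i hi => by simp only [stair]; omega) z

end Staircase

open Finset in
theorem prod_prod_Ioi_append {M β : Type*} [CommMonoid β] {n m : ℕ} (X : Fin n → M)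
    (Y : Fin m → M) (g : M → M → β) :
    ∏ i, ∏ j ∈ Ioi i, g (Fin.append X Y i) (Fin.append X Y j) =
      (∏ i, ∏ j ∈ Ioi i, g (X i) (X j)) * (∏ i, ∏ j ∈ Ioi i, g (Y i) (Y j)) *
        ∏ i, ∏ j, g (X i) (Y j) := by
  have hlt (i : Fin n) (j : Fin m) : Fin.castAdd m i < Fin.natAdd n j := by
    rw [Fin.lt_def, Fin.val_castAdd, Fin.val_natAdd]; omega
  have hnlt (i : Fin m) (j : Fin n) : ¬ Fin.natAdd n i < Fin.castAdd m j := by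
    rw [Fin.lt_def, Fin.val_castAdd, Fin.val_natAdd]; omega
  simp only [← filter_lt_eq_Ioi, prod_filter, Fin.prod_univ_add, Fin.append_left,
    Fin.append_right, (Fin.strictMono_castAdd m).lt_iff_lt, Fin.natAdd_lt_natAdd_iff, hlt, hnlt,
    if_true, if_false, prod_const_one, mul_one, prod_mul_distrib]
  ac_rfl

section Field

variable {K : Type} [Field K]

theorem hh_eq_hhR : ∀ (m : ℕ) (X : List K), hh m X = hhR m X
  | 0, _ => by simp [hh]
  | m + 1, [] => by simp [hh]
  | m + 1, x :: xs => by
    rw [hh, hhR_succ_cons, hh_eq_hhR m (x :: xs), hh_eq_hhR (m + 1) xs]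
  termination_by m X => (m, X.length)

theorem schur_eq_schurR (lam : ℕ → ℕ) (N : ℕ) (X : List K) :
    schur lam N X = schurR lam N X := by
  simp only [schur, schurR, hz, hzR, hh_eq_hhR]

end Field

/-- Staircase Schur polynomial factorizations. -/
theorem stmt17 (n m : ℕ) (X : Fin n → ℂ) (Y : Fin m → ℂ) :
    schur (stair (n + m)) (n + m) (List.ofFn X ++ List.ofFn Y) =
        schur (stair n) n (List.ofFn X) * schur (stair m) m (List.ofFn Y) *
          ∏ i : Fin n, ∏ j : Fin m, (X i + Y j) ∧
      schur (stair (n + m - 1)) (n + m) (List.ofFn X ++ List.ofFn Y) =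
        schur (stair (n - 1)) n (List.ofFn X) * schur (stair (m - 1)) m (List.ofFn Y) *
          ∏ i : Fin n, ∏ j : Fin m, (X i + Y j) := by
  simp only [← List.ofFn_fin_append, schur_eq_schurR, schurR_stair, schurR_stair_sub_one,
    prod_prod_Ioi_append X Y (· + ·), Fin.prod_univ_add, Fin.append_left, Fin.append_right,
    and_true]
  ring
end
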